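/- arXiv:1703.00097 — 3 statements merged into one kernel-verified Lean document; each statement's English description precedes it below -/
import Mathlib

section
/- Let Kn > 0 and let σ_s : (0,1) → ℝ be positive. Suppose f, g : (0,1) × [-1,1] → ℝ are continuous, continuously differentiable in x with jointly continuous x-derivatives, and satisfy the one-dimensional critical (σ_a ≡ 0) stationary radiative transfer equations pointwise: v·∂ₓf(x,v) = (σ_s(x)/Kn)·(⟨f⟩(x) − f(x,v)) and −v·∂ₓg(x,v) = (σ_s(x)/Kn)·(⟨g⟩(x) − g(x,v)) for all (x,v) ∈ (0,1) × [-1,1]. Then the function γ(x) := (1/Kn)·(⟨f⟩(x)·⟨g⟩(x) − ⟨f g⟩(x)) has derivative zero at every x ∈ (0,1); i.e. γ is constant in x. -/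
open MeasureTheory Set Metric
open scoped Interval

/-!
Differentiating under the integral sign,
`Kn γ' = ⟨∂ₓf · (⟨g⟩ - g) + (⟨f⟩ - f) · ∂ₓg⟩`. Multiplied by `σs / Kn`, the two transport
equations turn this integrand pointwise into `-v ∂ₓf ∂ₓg + v ∂ₓf ∂ₓg = 0`, and `σs / Kn ≠ 0`.
-/

/-- Velocity average `⟨h⟩(x) = (1/2)∫_{-1}^{1} h(x,v) dv`. -/
noncomputable def vavg (h : ℝ → ℝ → ℝ) (x : ℝ) : ℝ := (1 / 2) * ∫ v in (-1 : ℝ)..1, h x v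

theorem hasDerivAt_intervalIntegral_of_continuousOn {E : Type*} [NormedAddCommGroup E]
    [NormedSpace ℝ E] {F F' : ℝ → ℝ → E} {U : Set ℝ} {a b x₀ : ℝ} (hU : IsOpen U) (hx₀ : x₀ ∈ U)
    (hF : ContinuousOn (fun p : ℝ × ℝ => F p.1 p.2) (U ×ˢ [[a, b]]))
    (hF' : ContinuousOn (fun p : ℝ × ℝ => F' p.1 p.2) (U ×ˢ [[a, b]]))
    (hderiv : ∀ x ∈ U, ∀ t ∈ [[a, b]], HasDerivAt (fun y => F y t) (F' x t) x) :
    HasDerivAt (fun x => ∫ t in a..b, F x t) (∫ t in a..b, F' x₀ t) x₀ := by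
  obtain ⟨ε, hε, hball⟩ := nhds_basis_closedBall.mem_iff.1 (hU.mem_nhds hx₀)
  obtain ⟨C, hC⟩ := ((isCompact_closedBall x₀ ε).prod isCompact_uIcc).exists_bound_of_continuousOn
    (hF'.mono (prod_mono hball subset_rfl))
  have hIoc : Ι a b ⊆ [[a, b]] := uIoc_subset_uIcc
  refine (intervalIntegral.hasDerivAt_integral_of_dominated_loc_of_deriv_le (bound := fun _ => C)
    (closedBall_mem_nhds x₀ hε) ?_ (hF.uncurry_left x₀ hx₀).intervalIntegrable ?_ ?_
    intervalIntegrable_const ?_).2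
  · filter_upwards [hU.mem_nhds hx₀] with x hx
    exact ((hF.uncurry_left x hx).mono hIoc).aestronglyMeasurable measurableSet_uIoc
  · exact ((hF'.uncurry_left x₀ hx₀).mono hIoc).aestronglyMeasurable measurableSet_uIoc
  · exact .of_forall fun t ht x hx => hC (x, t) ⟨hx, hIoc ht⟩
  · exact .of_forall fun t ht x hx => hderiv x (hball hx) t (hIoc ht)

theorem vavg_eq_zero_of_forall_mem_Icc {h : ℝ → ℝ → ℝ} {x : ℝ}
    (hh : ∀ v ∈ Icc (-1 : ℝ) 1, h x v = 0) : vavg h x = 0 := by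
  rw [vavg, intervalIntegral.integral_congr (g := fun _ => 0) fun v hv =>
    hh v (by rwa [uIcc_of_le (by norm_num)] at hv)]
  simp

section Derivatives

variable {U : Set ℝ} {f g fx gx : ℝ → ℝ → ℝ} {x : ℝ}

theorem hasDerivAt_vavg (hU : IsOpen U) (hx : x ∈ U)
    (hf : ContinuousOn (fun p : ℝ × ℝ => f p.1 p.2) (U ×ˢ Icc (-1) 1))
    (hfx : ContinuousOn (fun p : ℝ × ℝ => fx p.1 p.2) (U ×ˢ Icc (-1) 1))
    (hf_deriv : ∀ x ∈ U, ∀ v ∈ Icc (-1 : ℝ) 1, HasDerivAt (fun y => f y v) (fx x v) x) :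
    HasDerivAt (vavg f) (vavg fx x) x := by
  rw [← uIcc_of_le (by norm_num : (-1 : ℝ) ≤ 1)] at hf hfx hf_deriv
  exact (hasDerivAt_intervalIntegral_of_continuousOn hU hx hf hfx hf_deriv).const_mul (1 / 2)

theorem hasDerivAt_vavg_mul_vavg_sub_vavg_mul (hU : IsOpen U) (hx : x ∈ U)
    (hf : ContinuousOn (fun p : ℝ × ℝ => f p.1 p.2) (U ×ˢ Icc (-1) 1))
    (hg : ContinuousOn (fun p : ℝ × ℝ => g p.1 p.2) (U ×ˢ Icc (-1) 1))
    (hfx : ContinuousOn (fun p : ℝ × ℝ => fx p.1 p.2) (U ×ˢ Icc (-1) 1))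
    (hgx : ContinuousOn (fun p : ℝ × ℝ => gx p.1 p.2) (U ×ˢ Icc (-1) 1))
    (hf_deriv : ∀ x ∈ U, ∀ v ∈ Icc (-1 : ℝ) 1, HasDerivAt (fun y => f y v) (fx x v) x)
    (hg_deriv : ∀ x ∈ U, ∀ v ∈ Icc (-1 : ℝ) 1, HasDerivAt (fun y => g y v) (gx x v) x) :
    HasDerivAt (fun y => vavg f y * vavg g y - vavg (fun y v => f y v * g y v) y)
      (vavg (fun y v => fx y v * (vavg g y - g y v) + (vavg f y - f y v) * gx y v) x) x := by
  have hfg : HasDerivAt (vavg fun y v => f y v * g y v)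
      (vavg (fun y v => fx y v * g y v + f y v * gx y v) x) x :=
    hasDerivAt_vavg hU hx (hf.mul hg) ((hfx.mul hg).add (hf.mul hgx))
      fun y hy v hv => (hf_deriv y hy v hv).mul (hg_deriv y hy v hv)
  refine (((hasDerivAt_vavg hU hx hf hfx hf_deriv).mul
    (hasDerivAt_vavg hU hx hg hgx hg_deriv)).sub hfg).congr_deriv ?_
  have hint : ∀ {h : ℝ → ℝ → ℝ}, ContinuousOn (fun p : ℝ × ℝ => h p.1 p.2) (U ×ˢ Icc (-1) 1) →
      IntervalIntegrable (h x) volume (-1) 1 := fun hh =>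
    ((hh.uncurry_left x hx).mono (uIcc_of_le (by norm_num)).le).intervalIntegrable
  have hsplit : ∀ v, fx x v * (vavg g x - g x v) + (vavg f x - f x v) * gx x v =
      (fx x v * vavg g x + vavg f x * gx x v) - (fx x v * g x v + f x v * gx x v) :=
    fun v => by ring
  change _ = 1 / 2 * ∫ v in (-1 : ℝ)..1, fx x v * (vavg g x - g x v) + (vavg f x - f x v) * gx x v
  simp only [hsplit]
  have h1 : IntervalIntegrable (fun v => fx x v * vavg g x) volume (-1) 1 := (hint hfx).mul_const _
  have h2 : IntervalIntegrable (fun v => vavg f x * gx x v) volume (-1) 1 := (hint hgx).const_mul _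
  have h3 : IntervalIntegrable (fun v => fx x v * g x v + f x v * gx x v) volume (-1) 1 :=
    hint (h := fun y v => fx y v * g y v + f y v * gx y v) ((hfx.mul hg).add (hf.mul hgx))
  rw [intervalIntegral.integral_sub (h1.add h2) h3,
    intervalIntegral.integral_add h1 h2, intervalIntegral.integral_mul_const,
    intervalIntegral.integral_const_mul]
  simp only [vavg]
  ring

end Derivatives

/-- **Proposition 4.1 (1D critical case).**  If `f, g` solve the 1D critical (σₐ ≡ 0)
stationary RTE and its adjoint, then
`γ(x) = (1/Kn)·(⟨f⟩(x)·⟨g⟩(x) − ⟨f g⟩(x))` has zero derivative on `(0,1)`. -/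
theorem gamma_const_in_x_critical_1D
    (Kn : ℝ) (hKn : 0 < Kn) (σs : ℝ → ℝ)
    (hσs : ∀ x ∈ Ioo (0 : ℝ) 1, 0 < σs x)
    (f g fx gx : ℝ → ℝ → ℝ)
    (hf_cont : ContinuousOn (fun p : ℝ × ℝ => f p.1 p.2) (Ioo 0 1 ×ˢ Icc (-1) 1))
    (hg_cont : ContinuousOn (fun p : ℝ × ℝ => g p.1 p.2) (Ioo 0 1 ×ˢ Icc (-1) 1))
    (hfx_cont : ContinuousOn (fun p : ℝ × ℝ => fx p.1 p.2) (Ioo 0 1 ×ˢ Icc (-1) 1))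
    (hgx_cont : ContinuousOn (fun p : ℝ × ℝ => gx p.1 p.2) (Ioo 0 1 ×ˢ Icc (-1) 1))
    (hf_deriv : ∀ x ∈ Ioo (0 : ℝ) 1, ∀ v ∈ Icc (-1 : ℝ) 1,
      HasDerivAt (fun y => f y v) (fx x v) x)
    (hg_deriv : ∀ x ∈ Ioo (0 : ℝ) 1, ∀ v ∈ Icc (-1 : ℝ) 1,
      HasDerivAt (fun y => g y v) (gx x v) x)
    (hfeq : ∀ x ∈ Ioo (0 : ℝ) 1, ∀ v ∈ Icc (-1 : ℝ) 1,
      v * fx x v = (σs x / Kn) * (vavg f x - f x v))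
    (hgeq : ∀ x ∈ Ioo (0 : ℝ) 1, ∀ v ∈ Icc (-1 : ℝ) 1,
      -(v * gx x v) = (σs x / Kn) * (vavg g x - g x v)) :
    ∀ x ∈ Ioo (0 : ℝ) 1,
      HasDerivAt
        (fun y => (1 / Kn) * (vavg f y * vavg g y - vavg (fun y v => f y v * g y v) y))
        0 x := by
  intro x hx
  have hσ : σs x / Kn ≠ 0 := (div_pos (hσs x hx) hKn).ne'
  have hcross : ∀ v ∈ Icc (-1 : ℝ) 1,
      fx x v * (vavg g x - g x v) + (vavg f x - f x v) * gx x v = 0 := by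
    intro v hv
    refine mul_left_cancel₀ hσ ?_
    linear_combination -(fx x v * hgeq x hx v hv) - gx x v * hfeq x hx v hv
  have hγ := (hasDerivAt_vavg_mul_vavg_sub_vavg_mul isOpen_Ioo hx hf_cont hg_cont hfx_cont
    hgx_cont hf_deriv hg_deriv).const_mul (1 / Kn)
  rwa [vavg_eq_zero_of_forall_mem_Icc hcross, mul_zero] at hγ
end

section
/- Let Kn > 0 and σ_{s0}, σ̃_s, σ_a : (0,1) → ℝ be continuous. Suppose f₀, f̃, g : (0,1) × [-1,1] → ℝ are continuous, continuously differentiable in x with jointly continuous x-derivatives, and satisfy pointwise: v·∂ₓf̃(x,v) = (σ_{s0}(x)/Kn)·(⟨f̃⟩(x) − f̃(x,v)) + (σ̃_s(x)/Kn)·(⟨f₀⟩(x) − f₀(x,v)) − Kn·σ_a(x)·f̃(x,v) and −v·∂ₓg(x,v) = (σ_{s0}(x)/Kn)·(⟨g⟩(x) − g(x,v)) − Kn·σ_a(x)·g(x,v). Then for every x ∈ (0,1): (d/dx) ∫_{-1}^{1} v·f̃(x,v)·g(x,v) dv = (σ̃_s(x)/Kn) · ∫_{-1}^{1} g(x,v)·(⟨f₀⟩(x)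 − f₀(x,v)) dv. -/
/-!
Differentiating under the integral sign, `∂ₓ ∫ v f̃ g dv = ∫ (g · v ∂ₓf̃ + f̃ · v ∂ₓg) dv`, and
substituting the two transport equations, the absorption terms cancel pointwise and the
scattering terms leave `(σ_{s0}/Kn) ∫ (g L f̃ − f̃ L g) dv + (σ̃_s/Kn) ∫ g L f₀ dv`. The first
integral vanishes because `L` is symmetric: `∫ (⟨f̃⟩ g − ⟨g⟩ f̃) dv = 2⟨f̃⟩⟨g⟩ − 2⟨g⟩⟨f̃⟩ = 0`.
-/

open MeasureTheory Set

open Filter Topology Function Interval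

theorem intervalIntegral.hasDerivAt_integral_of_continuousOn {𝕜 E : Type*} [RCLike 𝕜]
    [NormedAddCommGroup E] [NormedSpace ℝ E] [NormedSpace 𝕜 E]
    {F F' : 𝕜 → ℝ → E} {s : Set 𝕜} {a b : ℝ} {x₀ : 𝕜} (hs : s ∈ 𝓝 x₀) (hab : a ≤ b)
    (hF : ContinuousOn (uncurry F) (s ×ˢ Icc a b))
    (hF' : ContinuousOn (uncurry F') (s ×ˢ Icc a b))
    (hderiv : ∀ x ∈ s, ∀ t ∈ Icc a b, HasDerivAt (F · t) (F' x t) x) :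
    HasDerivAt (fun x => ∫ t in a..b, F x t) (∫ t in a..b, F' x₀ t) x₀ := by
  obtain ⟨K, hK, hKs, hKc⟩ := local_compact_nhds hs
  obtain ⟨C, hC⟩ := (hKc.prod isCompact_Icc).exists_bound_of_continuousOn
    (hF'.mono (prod_mono hKs subset_rfl))
  have hΙ : Ι a b ⊆ Icc a b := by rw [uIoc_of_le hab]; exact Ioc_subset_Icc_self
  have hslice : ∀ {G : 𝕜 → ℝ → E}, ContinuousOn (uncurry G) (s ×ˢ Icc a b) → ∀ x ∈ s,
      AEStronglyMeasurable (G x) (volume.restrict (Ι a b)) := fun hG x hx =>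
    ((hG.uncurry_left x hx).mono hΙ).aestronglyMeasurable measurableSet_uIoc
  refine (hasDerivAt_integral_of_dominated_loc_of_deriv_le hK
    (Filter.mem_of_superset hs fun x hx => hslice hF x hx) ?_
    (hslice hF' x₀ (mem_of_mem_nhds hs)) (bound := fun _ => C) ?_ intervalIntegrable_const ?_).2
  · exact (hF.uncurry_left x₀ (mem_of_mem_nhds hs)).intervalIntegrable_of_Icc hab
  · exact .of_forall fun t ht x hx => hC (x, t) ⟨hx, hΙ ht⟩
  · exact .of_forall fun t ht x hx => hderiv x (hKs hx) t (hΙ ht)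

theorem integral_vavg_mul_sub_vavg_mul_eq_zero {h k : ℝ → ℝ → ℝ} {x : ℝ}
    (hh : IntervalIntegrable (h x) volume (-1) 1)
    (hk : IntervalIntegrable (k x) volume (-1) 1) :
    ∫ v in (-1 : ℝ)..1, (vavg h x * k x v - vavg k x * h x v) = 0 := by
  rw [intervalIntegral.integral_sub (hk.const_mul _) (hh.const_mul _),
    intervalIntegral.integral_const_mul, intervalIntegral.integral_const_mul]
  simp only [vavg]
  ring

theorem greens_identity_scattering_1D_general
    (Kn : ℝ) (σs0 σst σa : ℝ → ℝ)
    (f0 ft g ftx gx : ℝ → ℝ → ℝ)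
    (hf0_cont : ContinuousOn (fun p : ℝ × ℝ => f0 p.1 p.2) (Ioo 0 1 ×ˢ Icc (-1) 1))
    (hft_cont : ContinuousOn (fun p : ℝ × ℝ => ft p.1 p.2) (Ioo 0 1 ×ˢ Icc (-1) 1))
    (hg_cont : ContinuousOn (fun p : ℝ × ℝ => g p.1 p.2) (Ioo 0 1 ×ˢ Icc (-1) 1))
    (hftx_cont : ContinuousOn (fun p : ℝ × ℝ => ftx p.1 p.2) (Ioo 0 1 ×ˢ Icc (-1) 1))
    (hgx_cont : ContinuousOn (fun p : ℝ × ℝ => gx p.1 p.2) (Ioo 0 1 ×ˢ Icc (-1) 1))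
    (hft_deriv : ∀ x ∈ Ioo (0 : ℝ) 1, ∀ v ∈ Icc (-1 : ℝ) 1,
      HasDerivAt (fun y => ft y v) (ftx x v) x)
    (hg_deriv : ∀ x ∈ Ioo (0 : ℝ) 1, ∀ v ∈ Icc (-1 : ℝ) 1,
      HasDerivAt (fun y => g y v) (gx x v) x)
    (hfteq : ∀ x ∈ Ioo (0 : ℝ) 1, ∀ v ∈ Icc (-1 : ℝ) 1,
      v * ftx x v = (σs0 x / Kn) * (vavg ft x - ft x v)
        + (σst x / Kn) * (vavg f0 x - f0 x v) - Kn * σa x * ft x v)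
    (hgeq : ∀ x ∈ Ioo (0 : ℝ) 1, ∀ v ∈ Icc (-1 : ℝ) 1,
      -(v * gx x v) = (σs0 x / Kn) * (vavg g x - g x v) - Kn * σa x * g x v) :
    ∀ x ∈ Ioo (0 : ℝ) 1,
      HasDerivAt (fun y => ∫ v in (-1 : ℝ)..1, v * ft y v * g y v)
        ((σst x / Kn) * ∫ v in (-1 : ℝ)..1, g x v * (vavg f0 x - f0 x v)) x := by
  intro x hx
  have hslice : ∀ {h : ℝ → ℝ → ℝ}, ContinuousOn (uncurry h) (Ioo 0 1 ×ˢ Icc (-1) 1) →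
      ContinuousOn (h x) (Icc (-1) 1) := fun hh => hh.uncurry_left x hx
  have hderiv := intervalIntegral.hasDerivAt_integral_of_continuousOn
    (F := fun y v => v * ft y v * g y v)
    (F' := fun y v => v * (ftx y v * g y v + ft y v * gx y v))
    (isOpen_Ioo.mem_nhds hx) (by norm_num)
    ((continuous_snd.continuousOn.mul hft_cont).mul hg_cont)
    (continuous_snd.continuousOn.mul ((hftx_cont.mul hg_cont).add (hft_cont.mul hgx_cont)))
    fun y hy v hv => by
      simpa only [Pi.mul_apply, mul_assoc] using
        ((hft_deriv y hy v hv).mul (hg_deriv y hy v hv)).const_mul v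
  have hpointwise : ∀ v ∈ [[(-1 : ℝ), 1]], v * (ftx x v * g x v + ft x v * gx x v)
      = (σs0 x / Kn) * (vavg ft x * g x v - vavg g x * ft x v)
        + (σst x / Kn) * (g x v * (vavg f0 x - f0 x v)) := fun v hv => by
    rw [uIcc_of_le (by norm_num)] at hv
    linear_combination g x v * hfteq x hx v hv - ft x v * hgeq x hx v hv
  have hintegrable : ∀ {h : ℝ → ℝ → ℝ}, ContinuousOn (h x) (Icc (-1) 1) →
      IntervalIntegrable (h x) volume (-1) 1 :=
    fun hh => hh.intervalIntegrable_of_Icc (by norm_num)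
  have hg := hintegrable (hslice hg_cont)
  have hft := hintegrable (hslice hft_cont)
  have hsource := hintegrable (h := fun y v => g y v * (vavg f0 y - f0 y v))
    ((hslice hg_cont).mul (continuousOn_const.sub (hslice hf0_cont)))
  rwa [intervalIntegral.integral_congr hpointwise,
    intervalIntegral.integral_add (((hg.const_mul _).sub (hft.const_mul _)).const_mul _)
      (hsource.const_mul _),
    intervalIntegral.integral_const_mul, intervalIntegral.integral_const_mul,
    integral_vavg_mul_sub_vavg_mul_eq_zero hft hg, mul_zero, zero_add] at hderiv

/-- **1D differential form of the duality relation (4.6) for the scattering coefficient.**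
If `f̃` solves the linearized RTE with source `(σ̃_s/Kn)·L f₀` and `g` solves the adjoint
equation, then
`(d/dx)∫_{-1}^1 v f̃ g dv = (σ̃_s(x)/Kn)·∫_{-1}^1 g·(⟨f₀⟩ − f₀) dv` on `(0,1)`. -/
theorem greens_identity_scattering_1D
    (Kn : ℝ) (hKn : 0 < Kn) (σs0 σst σa : ℝ → ℝ)
    (hσs0 : ContinuousOn σs0 (Ioo 0 1)) (hσst : ContinuousOn σst (Ioo 0 1))
    (hσa : ContinuousOn σa (Ioo 0 1))
    (f0 ft g ftx gx : ℝ → ℝ → ℝ)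
    (hf0_cont : ContinuousOn (fun p : ℝ × ℝ => f0 p.1 p.2) (Ioo 0 1 ×ˢ Icc (-1) 1))
    (hft_cont : ContinuousOn (fun p : ℝ × ℝ => ft p.1 p.2) (Ioo 0 1 ×ˢ Icc (-1) 1))
    (hg_cont : ContinuousOn (fun p : ℝ × ℝ => g p.1 p.2) (Ioo 0 1 ×ˢ Icc (-1) 1))
    (hftx_cont : ContinuousOn (fun p : ℝ × ℝ => ftx p.1 p.2) (Ioo 0 1 ×ˢ Icc (-1) 1))
    (hgx_cont : ContinuousOn (fun p : ℝ × ℝ => gx p.1 p.2) (Ioo 0 1 ×ˢ Icc (-1) 1))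
    (hft_deriv : ∀ x ∈ Ioo (0 : ℝ) 1, ∀ v ∈ Icc (-1 : ℝ) 1,
      HasDerivAt (fun y => ft y v) (ftx x v) x)
    (hg_deriv : ∀ x ∈ Ioo (0 : ℝ) 1, ∀ v ∈ Icc (-1 : ℝ) 1,
      HasDerivAt (fun y => g y v) (gx x v) x)
    (hfteq : ∀ x ∈ Ioo (0 : ℝ) 1, ∀ v ∈ Icc (-1 : ℝ) 1,
      v * ftx x v = (σs0 x / Kn) * (vavg ft x - ft x v)
        + (σst x / Kn) * (vavg f0 x - f0 x v) - Kn * σa x * ft x v)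
    (hgeq : ∀ x ∈ Ioo (0 : ℝ) 1, ∀ v ∈ Icc (-1 : ℝ) 1,
      -(v * gx x v) = (σs0 x / Kn) * (vavg g x - g x v) - Kn * σa x * g x v) :
    ∀ x ∈ Ioo (0 : ℝ) 1,
      HasDerivAt (fun y => ∫ v in (-1 : ℝ)..1, v * ft y v * g y v)
        ((σst x / Kn) * ∫ v in (-1 : ℝ)..1, g x v * (vavg f0 x - f0 x v)) x :=
  greens_identity_scattering_1D_general Kn σs0 σst σa f0 ft g ftx gx hf0_cont hft_cont hg_cont
    hftx_cont hgx_cont hft_deriv hg_deriv hfteq hgeq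
end

section
/- Let Kn ∈ (0,1], δ > 0, 0 < ε < 1/2, let P be a nonempty index set, and for each p ∈ P let γ_p ∈ L¹((0,1)). Suppose there are constants C₁, C₂ > 0, a finite-dimensional subspace V of L²((0,1)), and for each p a decomposition γ_p = Kn·h_p + r_p on (ε, 1−ε) with ∫_ε^{1−ε} |r_p| dx ≤ C₁·Kn³ and inf_{v∈V} ∫_ε^{1−ε} |h_p − v| dx ≤ C₂·Kn. Then there exists a continuous c : [0,1] → ℝ with ‖c‖_∞ = 1, vanishing outside [ε, 1−ε] and L²-orthogonal to V, such that sup_{p∈P} |∫₀¹ γ_p·c dx| ≤ (C₁ + C₂)·Kn². Consequently, for any σ̃ ∈ C([0,1]) with exact measurements b_p = ∫₀¹ γ_p·σ̃ dx, the function σ := σ̃ + (δ/((C₁+C₂)·Kn²))·c satisfies sup_p |∫₀¹ γ_p·σ dx − b_p| ≤ δ while ‖σ − σ̃‖_∞ = δ/((C₁+C₂)·Kn²). -/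
/-!
A finite-dimensional `V` imposes only `dim V` linear conditions on the coefficients of
`dim V + 1` bumps with disjoint supports in `(ε, 1 - ε)`, so some nontrivial combination `c` of
them is `L²`-orthogonal to `V`; divided by its largest coefficient it has sup-norm `1`.
Testing `γ_p = Kn h_p + r_p` against `c`, orthogonality lets `h_p` be replaced by `h_p - v` for
any `v ∈ V`, so `|∫ γ_p c| ≤ Kn ∫ |h_p - v| + ∫ |r_p|`; the infimum over `v` gives
`C₂ Kn² + C₁ Kn³ ≤ (C₁ + C₂) Kn²`. Adding `δ / ((C₁ + C₂) Kn²) • c` to `σ̃` therefore moves every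
measurement by at most `δ`.
-/

open MeasureTheory Set

noncomputable def μ01 : Measure ℝ := volume.restrict (Ioo (0 : ℝ) 1)

open Function
open scoped BoundedContinuousFunction

instance : IsFiniteMeasure μ01 := by
  unfold μ01
  infer_instance

theorem Submodule.exists_ne_zero_map_mem_orthogonal {𝕜 E H : Type*} [RCLike 𝕜]
    [NormedAddCommGroup H] [InnerProductSpace 𝕜 H] [AddCommGroup E] [Module 𝕜 E]
    [FiniteDimensional 𝕜 E] (K : Submodule 𝕜 H) [FiniteDimensional 𝕜 K] (B : E →ₗ[𝕜] H)
    (hK : Module.finrank 𝕜 K < Module.finrank 𝕜 E) : ∃ a ≠ 0, B a ∈ Kᗮ := by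
  obtain ⟨a, ha, ha0⟩ :=
    Submodule.exists_mem_ne_zero_of_ne_bot (LinearMap.ker_ne_bot_of_finrank_lt
      (f := K.orthogonalProjectionOnto.toLinearMap ∘ₗ B) hK)
  exact ⟨a, ha0, Submodule.orthogonalProjectionOnto_eq_zero_iff.mp ha⟩

theorem BoundedContinuousFunction.integral_mul_eq_inner_toLp {α : Type*} [TopologicalSpace α]
    [MeasurableSpace α] [BorelSpace α] {μ : Measure α} [IsFiniteMeasure μ] (f : α →ᵇ ℝ)
    (v : Lp ℝ 2 μ) : ∫ x, f x * v x ∂μ = inner ℝ (f.toLp 2 μ ℝ) v := by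
  rw [L2.inner_def]
  refine integral_congr_ae ?_
  filter_upwards [f.coeFn_toLp 2 μ ℝ] with x hx
  rw [hx, Real.inner_apply]

section DisjointSupports

variable {X ι : Type*} [Fintype ι] {φ : ι → X → ℝ}

theorem sum_mul_eq_of_ne_zero (hφ : Pairwise (Disjoint on fun k => support (φ k)))
    (a : ι → ℝ) {j : ι} {x : X} (hx : φ j x ≠ 0) : ∑ k, a k * φ k x = a j * φ j x := by
  refine Finset.sum_eq_single j (fun k _ hkj => ?_) (by simp)
  have : φ k x = 0 := notMem_support.mp
    fun hk => (hφ hkj).ne_of_mem hk (mem_support.mpr hx) rfl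
  rw [this, mul_zero]

theorem abs_sum_mul_le_norm (hφ : Pairwise (Disjoint on fun k => support (φ k)))
    (hφ1 : ∀ k x, |φ k x| ≤ 1) (a : ι → ℝ) (x : X) : |∑ k, a k * φ k x| ≤ ‖a‖ := by
  by_cases hx : ∃ j, φ j x ≠ 0
  · obtain ⟨j, hj⟩ := hx
    rw [sum_mul_eq_of_ne_zero hφ a hj, abs_mul]
    calc |a j| * |φ j x| ≤ ‖a‖ * 1 :=
          mul_le_mul (norm_le_pi_norm a j) (hφ1 j x) (abs_nonneg _) (norm_nonneg a)
      _ = ‖a‖ := mul_one _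
  · push Not at hx
    simp [hx]

theorem exists_abs_sum_mul_eq_norm [Nonempty ι]
    (hφ : Pairwise (Disjoint on fun k => support (φ k)))
    (hpeak : ∀ k, ∃ x, φ k x = 1) (a : ι → ℝ) :
    ∃ x, |∑ k, a k * φ k x| = ‖a‖ := by
  obtain ⟨j, -, hj⟩ := Finset.exists_max_image Finset.univ (fun k => ‖a k‖) Finset.univ_nonempty
  obtain ⟨x, hx⟩ := hpeak j
  refine ⟨x, ?_⟩
  rw [sum_mul_eq_of_ne_zero hφ a (by rw [hx]; exact one_ne_zero), hx, mul_one]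
  exact le_antisymm (norm_le_pi_norm a j)
    ((pi_norm_le_iff_of_nonneg (norm_nonneg _)).mpr fun k => hj k (Finset.mem_univ k))

end DisjointSupports

theorem exists_disjoint_bumps_in_Ioo {a b : ℝ} (hab : a < b) (N : ℕ) :
    ∃ φ : Fin N → ℝ →ᵇ ℝ, (∀ k x, |φ k x| ≤ 1) ∧ (∀ k, support (φ k) ⊆ Ioo a b) ∧
      Pairwise (Disjoint on fun k => support (φ k)) ∧ ∀ k, ∃ x, φ k x = 1 := by
  rcases Nat.eq_zero_or_pos N with rfl | hN
  · exact ⟨finZeroElim, finZeroElim, finZeroElim, fun k => k.elim0, finZeroElim⟩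
  set w := (b - a) / N
  have hw : 0 < w := div_pos (sub_pos.mpr hab) (Nat.cast_pos.mpr hN)
  let m : Fin N → ℝ := fun k => a + (k + 1 / 2) * w
  let f : (k : Fin N) → ContDiffBump (m k) := fun k => ⟨w / 4, w / 2, by positivity, by linarith⟩
  have hf1 : ∀ k x, |f k x| ≤ 1 := fun k x =>
    abs_le.mpr ⟨by linarith [(f k).nonneg' x], (f k).le_one⟩
  refine ⟨fun k => .ofNormedAddCommGroup (f k) (f k).continuous 1 (hf1 k), hf1, fun k => ?_,
    fun j k hjk => ?_, fun k => ⟨m k, (f k).one_of_mem_closedBall (Metric.mem_closedBall_self ?_)⟩⟩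
  · have hk : (k : ℝ) + 1 ≤ N := by exact_mod_cast k.isLt
    have hNw : N * w = b - a := mul_div_cancel₀ _ (Nat.cast_ne_zero.mpr hN.ne')
    simp only [BoundedContinuousFunction.coe_ofNormedAddCommGroup, (f k).support_eq,
      Real.ball_eq_Ioo]
    apply Ioo_subset_Ioo <;> simp only [m, f] <;> nlinarith [k.val.cast_nonneg (α := ℝ)]
  · have hjk' : (1 : ℝ) ≤ |(j : ℝ) - k| := by
      have := Int.one_le_abs (sub_ne_zero.mpr (Int.ofNat_inj.not.mpr (Fin.val_ne_of_ne hjk)))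
      exact_mod_cast this
    simp only [onFun, BoundedContinuousFunction.coe_ofNormedAddCommGroup, (f _).support_eq]
    apply Metric.ball_disjoint_ball
    simp only [m, f, Real.dist_eq]
    rw [show a + (j + 1 / 2) * w - (a + (k + 1 / 2) * w) = (j - k) * w by ring, abs_mul,
      abs_of_pos hw]
    nlinarith
  · simp only [f]
    positivity

theorem exists_continuous_bump_orthogonal {μ : Measure ℝ} [IsFiniteMeasure μ] {a b : ℝ}
    (hab : a < b) (V : Submodule ℝ (Lp ℝ 2 μ)) [FiniteDimensional ℝ V] :
    ∃ c : ℝ → ℝ, Continuous c ∧ (∀ x ∉ Ioo a b, c x = 0) ∧ (∀ x, |c x| ≤ 1) ∧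
      (∃ x, |c x| = 1) ∧ ∀ v ∈ V, ∫ x, c x * v x ∂μ = 0 := by
  obtain ⟨φ, hφ1, hφab, hφ, hpeak⟩ := exists_disjoint_bumps_in_Ioo hab (Module.finrank ℝ V + 1)
  let B := (BoundedContinuousFunction.toLp 2 μ ℝ).toLinearMap ∘ₗ Fintype.linearCombination ℝ φ
  obtain ⟨α, hα0, hα⟩ := V.exists_ne_zero_map_mem_orthogonal B
    (by rw [Module.finrank_fin_fun]; omega)
  set β := ‖α‖⁻¹ • α
  have hβ : ‖β‖ = 1 := norm_smul_inv_norm hα0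
  have hc : ⇑(Fintype.linearCombination ℝ φ β) = fun x => ∑ k, β k * φ k x := by
    ext x
    simp [Fintype.linearCombination_apply]
  refine ⟨fun x => ∑ k, β k * φ k x, hc ▸ (Fintype.linearCombination ℝ φ β).continuous,
    fun x hx => ?_, fun x => hβ ▸ abs_sum_mul_le_norm hφ hφ1 β x,
    hβ ▸ exists_abs_sum_mul_eq_norm hφ hpeak β, fun v hv => ?_⟩
  · refine Finset.sum_eq_zero fun k _ => ?_
    rw [notMem_support.mp fun h => hx (hφab k h), mul_zero]
  · rw [← hc, BoundedContinuousFunction.integral_mul_eq_inner_toLp, real_inner_comm]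
    refine Submodule.inner_right_of_mem_orthogonal hv ?_
    have : B β = ‖α‖⁻¹ • B α := map_smul B _ _
    exact this ▸ Vᗮ.smul_mem _ hα

section Measurement

variable {α : Type*} [MeasurableSpace α] {ν : Measure α}

theorem abs_integral_mul_le_integral_abs {f c : α → ℝ} (hf : Integrable f ν)
    (hc : ∀ x, |c x| ≤ 1) : |∫ x, f x * c x ∂ν| ≤ ∫ x, |f x| ∂ν :=
  calc |∫ x, f x * c x ∂ν| ≤ ∫ x, |f x * c x| ∂ν := abs_integral_le_integral_abs
    _ ≤ ∫ x, |f x| ∂ν := by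
      refine integral_mono_of_nonneg (.of_forall fun x => abs_nonneg _) hf.abs
        (.of_forall fun x => ?_)
      simpa [abs_mul] using mul_le_mul_of_nonneg_left (hc x) (abs_nonneg (f x))

theorem abs_integral_mul_le_of_eq_add {γ h r v c : α → ℝ} {κ : ℝ}
    (hγ : ∀ᵐ x ∂ν, γ x = κ * h x + r x) (hh : Integrable h ν) (hr : Integrable r ν)
    (hv : Integrable v ν) (hcm : AEStronglyMeasurable c ν) (hc : ∀ x, |c x| ≤ 1)
    (horth : ∫ x, v x * c x ∂ν = 0) :
    |∫ x, γ x * c x ∂ν| ≤ |κ| * ∫ x, |h x - v x| ∂ν + ∫ x, |r x| ∂ν := by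
  have hcb : ∀ᵐ x ∂ν, ‖c x‖ ≤ 1 := .of_forall hc
  have hmul {f : α → ℝ} (hf : Integrable f ν) : Integrable (fun x => f x * c x) ν := by
    simpa only [mul_comm] using hf.bdd_mul hcm hcb
  have hsplit : ∫ x, γ x * c x ∂ν
      = κ * ∫ x, (h x - v x) * c x ∂ν + κ * ∫ x, v x * c x ∂ν + ∫ x, r x * c x ∂ν := by
    rw [← integral_const_mul, ← integral_const_mul, ← integral_add, ← integral_add]
    · refine integral_congr_ae ?_
      filter_upwards [hγ] with x hx
      rw [hx]
      ring
    · exact ((hmul (hh.sub hv)).const_mul κ).add ((hmul hv).const_mul κ)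
    · exact hmul hr
    · exact (hmul (hh.sub hv)).const_mul κ
    · exact (hmul hv).const_mul κ
  rw [hsplit, horth, mul_zero, add_zero]
  calc |κ * ∫ x, (h x - v x) * c x ∂ν + ∫ x, r x * c x ∂ν|
      ≤ |κ| * |∫ x, (h x - v x) * c x ∂ν| + |∫ x, r x * c x ∂ν| := by
        rw [← abs_mul]; exact abs_add_le _ _
    _ ≤ |κ| * ∫ x, |h x - v x| ∂ν + ∫ x, |r x| ∂ν := by
        gcongr
        · exact abs_integral_mul_le_integral_abs (hh.sub hv) hc
        · exact abs_integral_mul_le_integral_abs hr hc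

theorem abs_integral_mul_le_of_sInf_le {ι : Type*} {S : Set ι} (hS : S.Nonempty) {u : ι → α → ℝ}
    {γ h r c : α → ℝ} {κ A B : ℝ} (hκ : 0 < κ) (hγ : ∀ᵐ x ∂ν, γ x = κ * h x + r x)
    (hh : Integrable h ν) (hr : Integrable r ν) (hu : ∀ i ∈ S, Integrable (u i) ν)
    (hcm : AEStronglyMeasurable c ν) (hc : ∀ x, |c x| ≤ 1)
    (horth : ∀ i ∈ S, ∫ x, u i x * c x ∂ν = 0) (hrA : ∫ x, |r x| ∂ν ≤ A)
    (hinf : sInf {t : ℝ | ∃ i ∈ S, t = ∫ x, |h x - u i x| ∂ν} ≤ B) :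
    |∫ x, γ x * c x ∂ν| ≤ κ * B + A := by
  suffices (|∫ x, γ x * c x ∂ν| - A) / κ ≤ B by
    rw [div_le_iff₀ hκ] at this; linarith
  refine le_trans (le_csInf ?_ ?_) hinf
  · obtain ⟨i, hi⟩ := hS
    exact ⟨_, i, hi, rfl⟩
  rintro _ ⟨i, hi, rfl⟩
  rw [div_le_iff₀ hκ]
  have := abs_integral_mul_le_of_eq_add hγ hh hr (hu i hi) hcm hc (horth i hi)
  rw [abs_of_pos hκ] at this
  linarith

theorem abs_integral_mul_add_mul_sub_le {γ σ c : α → ℝ} {T B : ℝ}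
    (hσ : Integrable (fun x => γ x * σ x) ν) (hc : Integrable (fun x => γ x * c x) ν)
    (hT : 0 ≤ T) (hB : |∫ x, γ x * c x ∂ν| ≤ B) :
    |∫ x, γ x * (σ x + T * c x) ∂ν - ∫ x, γ x * σ x ∂ν| ≤ T * B := by
  have hsplit : (fun x => γ x * (σ x + T * c x)) = fun x => γ x * σ x + T * (γ x * c x) := by
    ext x
    ring
  rw [hsplit, integral_add hσ (hc.const_mul T), integral_const_mul, add_sub_cancel_left, abs_mul,
    abs_of_nonneg hT]
  exact mul_le_mul_of_nonneg_left hB hT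

end Measurement

theorem absorption_distinguishability_lower_bound_general
    (Kn δ ε : ℝ) (hKn : Kn ∈ Ioc (0 : ℝ) 1) (hδ : 0 < δ)
    (hε : 0 < ε) (hε' : ε < 1 / 2)
    (P : Type*) (γ : P → ℝ → ℝ)
    (hγ : ∀ p, IntegrableOn (γ p) (Ioo 0 1))
    (C₁ C₂ : ℝ) (hC₁ : 0 < C₁) (hC₂ : 0 < C₂)
    (V : Submodule ℝ (Lp ℝ 2 μ01)) (hV : FiniteDimensional ℝ V)
    (h r : P → ℝ → ℝ)
    (hdec : ∀ p, ∀ x ∈ Ioo ε (1 - ε), γ p x = Kn * h p x + r p x)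
    (hhint : ∀ p, IntegrableOn (h p) (Ioo ε (1 - ε)))
    (hrint : ∀ p, IntegrableOn (r p) (Ioo ε (1 - ε)))
    (hr : ∀ p, (∫ x in Ioo ε (1 - ε), |r p x|) ≤ C₁ * Kn ^ 3)
    (hinf : ∀ p,
      sInf {t : ℝ | ∃ v ∈ V,
          t = ∫ x in Ioo ε (1 - ε), |h p x - ((v : Lp ℝ 2 μ01) : ℝ → ℝ) x|}
        ≤ C₂ * Kn) :
    ∃ c : ℝ → ℝ, Continuous c ∧
      (∀ x, x ∉ Icc ε (1 - ε) → c x = 0) ∧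
      (∀ x, |c x| ≤ 1) ∧ (∃ x, |c x| = 1) ∧
      (∀ v ∈ V, (∫ x in Ioo (0 : ℝ) 1, c x * ((v : Lp ℝ 2 μ01) : ℝ → ℝ) x) = 0) ∧
      (∀ p, |∫ x in Ioo (0 : ℝ) 1, γ p x * c x| ≤ (C₁ + C₂) * Kn ^ 2) ∧
      ∀ σt : ℝ → ℝ, Continuous σt →
        (∀ p, |(∫ x in Ioo (0 : ℝ) 1, γ p x * (σt x + δ / ((C₁ + C₂) * Kn ^ 2) * c x))
              - ∫ x in Ioo (0 : ℝ) 1, γ p x * σt x| ≤ δ) ∧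
        (∀ x, |(σt x + δ / ((C₁ + C₂) * Kn ^ 2) * c x) - σt x|
            ≤ δ / ((C₁ + C₂) * Kn ^ 2)) ∧
        (∃ x, |(σt x + δ / ((C₁ + C₂) * Kn ^ 2) * c x) - σt x|
            = δ / ((C₁ + C₂) * Kn ^ 2)) := by
  obtain ⟨hKn0, hKn1⟩ := hKn
  have hs : Ioo ε (1 - ε) ⊆ Ioo 0 1 := Ioo_subset_Ioo (by linarith) (by linarith)
  have := hV
  obtain ⟨c, hc_cont, hc_zero, hc_le, hc_one, hc_orth⟩ :=
    exists_continuous_bump_orthogonal (by linarith : ε < 1 - ε) V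
  have hrestrict (F : ℝ → ℝ) : ∫ x in Ioo 0 1, F x * c x = ∫ x in Ioo ε (1 - ε), F x * c x :=
    setIntegral_eq_of_subset_of_forall_sdiff_eq_zero measurableSet_Ioo hs
      fun x hx => by rw [hc_zero x hx.2, mul_zero]
  have horth (v : Lp ℝ 2 μ01) (hv : v ∈ V) : ∫ x in Ioo ε (1 - ε), v x * c x = 0 := by
    rw [← hrestrict]
    simp only [mul_comm _ (c _)]
    exact hc_orth v hv
  have hmeas (p : P) : |∫ x in Ioo (0 : ℝ) 1, γ p x * c x| ≤ (C₁ + C₂) * Kn ^ 2 := by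
    have := abs_integral_mul_le_of_sInf_le ⟨0, V.zero_mem⟩ hKn0
      ((ae_restrict_iff' measurableSet_Ioo).mpr (.of_forall (hdec p))) (hhint p) (hrint p)
      (fun v _ => IntegrableOn.mono_set ((Lp.memLp v).integrable one_le_two) hs)
      hc_cont.aestronglyMeasurable hc_le horth (hr p) (hinf p)
    rw [hrestrict]
    nlinarith [mul_le_mul_of_nonneg_left hKn1 (by positivity : 0 ≤ C₁ * Kn ^ 2)]
  have hγmul {f : ℝ → ℝ} (hf : Continuous f) (p : P) :
      IntegrableOn (fun x => γ p x * f x) (Ioo 0 1) :=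
    (hγ p).mul_continuousOn_of_subset hf.continuousOn measurableSet_Ioo isCompact_Icc
      Ioo_subset_Icc_self
  have hB : 0 < (C₁ + C₂) * Kn ^ 2 := by positivity
  have hT : 0 < δ / ((C₁ + C₂) * Kn ^ 2) := div_pos hδ hB
  refine ⟨c, hc_cont, fun x hx => hc_zero x fun h => hx (Ioo_subset_Icc_self h), hc_le, hc_one,
    hc_orth, hmeas, fun σt hσt => ⟨fun p => ?_, fun x => ?_, ?_⟩⟩
  · calc _ ≤ δ / ((C₁ + C₂) * Kn ^ 2) * ((C₁ + C₂) * Kn ^ 2) :=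
          abs_integral_mul_add_mul_sub_le (hγmul hσt p) (hγmul hc_cont p) hT.le (hmeas p)
      _ = δ := div_mul_cancel₀ δ hB.ne'
  · rw [add_sub_cancel_left, abs_mul, abs_of_pos hT]
    exact mul_le_of_le_one_right hT.le (hc_le x)
  · obtain ⟨x, hx⟩ := hc_one
    exact ⟨x, by rw [add_sub_cancel_left, abs_mul, abs_of_pos hT, hx, mul_one]⟩

/-- **Abstract form of Theorem 3.2 (ill-conditioning of the absorption reconstruction in
the diffusion limit).**  If each kernel `γ_p` decomposes on `(ε,1−ε)` as
`γ_p = Kn·h_p + r_p` with `∫|r_p| ≤ C₁·Kn³` and `h_p` within `C₂·Kn` (in `L¹`) of a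
finite-dimensional subspace `V` of `L²((0,1))`, then there exists a continuous bump `c`
with sup-norm `1`, supported in `[ε,1−ε]`, orthogonal to `V`, whose measurements are all
at most `(C₁+C₂)·Kn²`; hence perturbing any exact coefficient `σ̃` by
`(δ/((C₁+C₂)Kn²))·c` changes the measurements by at most `δ` while moving the
coefficient by `δ/((C₁+C₂)Kn²)` in sup-norm. -/
theorem absorption_distinguishability_lower_bound
    (Kn δ ε : ℝ) (hKn : Kn ∈ Ioc (0 : ℝ) 1) (hδ : 0 < δ)
    (hε : 0 < ε) (hε' : ε < 1 / 2)
    (P : Type*) [Nonempty P] (γ : P → ℝ → ℝ)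
    (hγ : ∀ p, IntegrableOn (γ p) (Ioo 0 1))
    (C₁ C₂ : ℝ) (hC₁ : 0 < C₁) (hC₂ : 0 < C₂)
    (V : Submodule ℝ (Lp ℝ 2 μ01)) (hV : FiniteDimensional ℝ V)
    (h r : P → ℝ → ℝ)
    (hdec : ∀ p, ∀ x ∈ Ioo ε (1 - ε), γ p x = Kn * h p x + r p x)
    (hhint : ∀ p, IntegrableOn (h p) (Ioo ε (1 - ε)))
    (hrint : ∀ p, IntegrableOn (r p) (Ioo ε (1 - ε)))
    (hr : ∀ p, (∫ x in Ioo ε (1 - ε), |r p x|) ≤ C₁ * Kn ^ 3)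
    (hinf : ∀ p,
      sInf {t : ℝ | ∃ v ∈ V,
          t = ∫ x in Ioo ε (1 - ε), |h p x - ((v : Lp ℝ 2 μ01) : ℝ → ℝ) x|}
        ≤ C₂ * Kn) :
    ∃ c : ℝ → ℝ, Continuous c ∧
      (∀ x, x ∉ Icc ε (1 - ε) → c x = 0) ∧
      (∀ x, |c x| ≤ 1) ∧ (∃ x, |c x| = 1) ∧
      (∀ v ∈ V, (∫ x in Ioo (0 : ℝ) 1, c x * ((v : Lp ℝ 2 μ01) : ℝ → ℝ) x) = 0) ∧
      (∀ p, |∫ x in Ioo (0 : ℝ) 1, γ p x * c x| ≤ (C₁ + C₂) * Kn ^ 2) ∧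
      ∀ σt : ℝ → ℝ, Continuous σt →
        (∀ p, |(∫ x in Ioo (0 : ℝ) 1, γ p x * (σt x + δ / ((C₁ + C₂) * Kn ^ 2) * c x))
              - ∫ x in Ioo (0 : ℝ) 1, γ p x * σt x| ≤ δ) ∧
        (∀ x, |(σt x + δ / ((C₁ + C₂) * Kn ^ 2) * c x) - σt x|
            ≤ δ / ((C₁ + C₂) * Kn ^ 2)) ∧
        (∃ x, |(σt x + δ / ((C₁ + C₂) * Kn ^ 2) * c x) - σt x|
            = δ / ((C₁ + C₂) * Kn ^ 2)) :=
  absorption_distinguishability_lower_bound_general Kn δ ε hKn hδ hε hε' P γ hγ C₁ C₂ hC₁ hC₂ V hV h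
    r hdec hhint hrint hr hinf
end
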